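/- Fix an odd n ≥ 3 and g ≥ 0, and let π: R_{g,n} → R_{g,n−2} be the ring homomorphism induced by sending α ↦ α, β ↦ β, γ ↦ γ, δ_i ↦ δ_i for i ≤ n−3, δ_{n−1} ↦ −δ_{n−2}, δ_n ↦ δ_{n−2} (well-defined since it preserves the defining relations). For a subset I ⊆ {1,…,n} with |I| ≤ (n−1)/2, let R_{g,n}^I be the image in R_{g,n} of δ^I·ℂ[ω,β,γ] ⊕ δ^{Iᶜ}·ℂ[ω,β,γ]. Then the restriction of π to R_{g,n}^I is injective. -/

import Mathlib

/-!
Specialise `β ↦ 2 - s²`, `δ_i ↦ ε_i s` with signs `ε_i = ±1` (into `ℂ[ω, s, γ]`); this kills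
every `δ_i² + β - 2` and sends the relation ideal into `(γ^{g+1})`. Composed with `π` it is the
specialisation by the pulled-back signs `(ε_1, …, ε_{n-2}, -ε_{n-2}, ε_{n-2})`, so `π x ∈ rel`
gives `c • s^|I| f(ω, 2 - s², γ) + c' • s^|Iᶜ| h(ω, 2 - s², γ) ∈ (γ^{g+1})`, with `c`, `c'` the
sign products over `I` and `Iᶜ`. Flipping `ε_{n-2}` flips three pulled-back signs, hence the sign
of `c c'`, and the two resulting equations form an invertible system. So both terms lie in
`(γ^{g+1})`; since `γ` is prime, `γ ∤ s`, and `β ↦ 2 - s²` acts injectively on the coefficients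
of the powers of `γ`, `γ^{g+1}` divides `f` and `h`, whence `x ∈ rel`.
-/

open MvPolynomial

-- `ω = X (inl 0)`, `β = X (inl 1)`, `γ = X (inl 2)`, `δ_i = X (inr i)`, indices from 0.
/-- The ideal `(γ^{g+1}, δ₁²+β−2, …, δ_n²+β−2)`. -/
noncomputable def Stmt14.rel (n g : ℕ) : Ideal (MvPolynomial (Fin 3 ⊕ Fin n) ℂ) :=
  Ideal.span ({(X (Sum.inl 2) : MvPolynomial (Fin 3 ⊕ Fin n) ℂ) ^ (g + 1)} ∪
    Set.range fun i : Fin n =>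
      (X (Sum.inr i) : MvPolynomial (Fin 3 ⊕ Fin n) ℂ) ^ 2 + X (Sum.inl 1) - 2)

/-- The homomorphism `π = π^{g,n}_{g,n−2}` on polynomial rings (`n = k+2`):
`ω,β,γ ↦ ω,β,γ`, `δ_i ↦ δ_i` for `i < k`, `δ_k ↦ −δ_{k−1}`, `δ_{k+1} ↦ δ_{k−1}`. -/
noncomputable def Stmt14.pi (k : ℕ) (hk : 0 < k) :
    MvPolynomial (Fin 3 ⊕ Fin (k + 2)) ℂ →ₐ[ℂ] MvPolynomial (Fin 3 ⊕ Fin k) ℂ :=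
  MvPolynomial.aeval (Sum.elim (fun j => X (Sum.inl j)) fun i : Fin (k + 2) =>
    if h : (i : ℕ) < k then X (Sum.inr ⟨(i : ℕ), h⟩)
    else if (i : ℕ) = k then -X (Sum.inr ⟨k - 1, Nat.sub_lt hk one_pos⟩)
    else X (Sum.inr ⟨k - 1, Nat.sub_lt hk one_pos⟩))

theorem Submodule.mem_and_mem_of_smul_add_smul_mem {K M : Type*} [Field K] [AddCommGroup M]
    [Module K M] {p : Submodule K M} {a b c d : K} {u w : M} (hdet : a * d - b * c ≠ 0)
    (h₁ : a • u + b • w ∈ p) (h₂ : c • u + d • w ∈ p) : u ∈ p ∧ w ∈ p := by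
  constructor
  · rw [← p.smul_mem_iff hdet]
    convert p.sub_mem (p.smul_mem d h₁) (p.smul_mem b h₂) using 1
    module
  · rw [← p.smul_mem_iff hdet]
    convert p.sub_mem (p.smul_mem a h₂) (p.smul_mem c h₁) using 1
    module

theorem Finset.prod_mul_prod_compl_sub_ne_zero {ι K : Type*} [Fintype ι] [DecidableEq ι]
    [Field K] [NeZero (2 : K)] {c c' : ι → K} (hc : ∀ i, c i ^ 2 = 1) (hc' : ∀ i, c' i ^ 2 = 1)
    (hprod : ∏ i, c' i = -∏ i, c i) (I : Finset ι) :
    (∏ i ∈ I, c i) * (∏ i ∈ Iᶜ, c' i) - (∏ i ∈ Iᶜ, c i) * (∏ i ∈ I, c' i) ≠ 0 := by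
  have hsq : ∀ {e : ι → K}, (∀ i, e i ^ 2 = 1) → ∀ J : Finset ι, (∏ i ∈ J, e i) ^ 2 = 1 :=
    fun he J => by rw [← Finset.prod_pow]; exact Finset.prod_eq_one fun i _ => he i
  rw [← Finset.prod_mul_prod_compl I, ← Finset.prod_mul_prod_compl I] at hprod
  intro hdet
  have h2 : (2 : K) * ∏ i ∈ Iᶜ, c i = 0 := by
    linear_combination (-∏ i ∈ Iᶜ, c i) * hsq hc' I - (∏ i ∈ I, c' i) * hdet
      + (∏ i ∈ I, c i) * hprod - (∏ i ∈ Iᶜ, c i) * hsq hc I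
  have h0 : (∏ i ∈ Iᶜ, c i) ^ 2 = 0 := by
    rw [(mul_eq_zero.mp h2).resolve_left two_ne_zero, zero_pow two_ne_zero]
  exact one_ne_zero ((hsq hc Iᶜ).symm.trans h0)

namespace Stmt14

theorem injective_aeval_X_two_sub_X_sq :
    Function.Injective
      (aeval ![X 0, 2 - X 1 ^ 2] : MvPolynomial (Fin 2) ℂ →ₐ[ℂ] MvPolynomial (Fin 2) ℂ) := by
  set q : Fin 2 → Polynomial ℂ := ![Polynomial.X, 2 - Polynomial.X ^ 2]
  have hq : (q 1).natDegree = 2 := by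
    simp [q, Polynomial.natDegree_sub_eq_right_of_natDegree_lt]
  have htr : ∀ i, Transcendental ℂ (q i) := by
    intro i
    fin_cases i
    · exact Polynomial.transcendental_X ℂ
    · exact Polynomial.transcendental _ (by simp [hq])
        (mem_nonZeroDivisors_of_ne_zero (Polynomial.leadingCoeff_ne_zero.mpr
          (Polynomial.ne_zero_of_natDegree_gt (n := 0) (by simp [hq]))))
  have h : (aeval ![X 0, 2 - X 1 ^ 2] : MvPolynomial (Fin 2) ℂ →ₐ[ℂ] MvPolynomial (Fin 2) ℂ) =
      aeval fun i => Polynomial.aeval (X i) (q i) := by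
    ext i
    fin_cases i <;> simp [q, map_ofNat]
  rw [h]
  exact MvPolynomial.algebraicIndependent_polynomial_aeval_X q htr

-- In the target ring `X 0 = ω`, `X 1 = s`, `X 2 = γ`.
noncomputable def substBeta : MvPolynomial (Fin 3) ℂ →ₐ[ℂ] MvPolynomial (Fin 3) ℂ :=
  aeval ![X 0, 2 - X 1 ^ 2, X 2]

theorem X_two_pow_dvd_of_dvd_substBeta {m : ℕ} {f : MvPolynomial (Fin 3) ℂ}
    (h : X 2 ^ m ∣ substBeta f) : X 2 ^ m ∣ f := by
  -- as polynomials in `X 2` over `ℂ[X 0, X 1]`, `substBeta` acts coefficientwise by `θ`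
  set θ : MvPolynomial (Fin 2) ℂ →ₐ[ℂ] MvPolynomial (Fin 2) ℂ := aeval ![X 0, 2 - X 1 ^ 2]
  set E : MvPolynomial (Fin 3) ℂ ≃ₐ[ℂ] Polynomial (MvPolynomial (Fin 2) ℂ) :=
    (renameEquiv ℂ (finSuccEquiv' 2)).trans (optionEquivLeft ℂ (Fin 2))
  have hX : ∀ i : Fin 3, E (X i) = ![Polynomial.C (X 0), Polynomial.C (X 1), Polynomial.X] i := by
    intro i
    have h0 : finSuccEquiv' (2 : Fin 3) 0 = some 0 := by decide
    have h1 : finSuccEquiv' (2 : Fin 3) 1 = some 1 := by decide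
    fin_cases i <;> simp [E, h0, h1, optionEquivLeft_X_some, optionEquivLeft_X_none]
  have hX2 : E (X 2) = Polynomial.X := hX 2
  have hE : (E : _ →ₐ[ℂ] _).comp substBeta = (Polynomial.mapAlgHom θ).comp E := by
    refine MvPolynomial.algHom_ext fun i => ?_
    fin_cases i <;> simp [substBeta, hX, θ, map_ofNat]
  have hmap : (Polynomial.X ^ m).map θ.toRingHom ∣ (E f).map θ.toRingHom := by
    have hσ : E (substBeta f) = (E f).map θ.toRingHom := AlgHom.congr_fun hE f
    rw [Polynomial.map_pow, Polynomial.map_X, ← hσ, ← hX2, ← map_pow]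
    exact map_dvd E h
  have hθ : Function.Injective θ.toRingHom := injective_aeval_X_two_sub_X_sq
  have := map_dvd E.symm
    ((Polynomial.map_dvd_map _ hθ (Polynomial.monic_X_pow m)).mp hmap)
  rwa [map_pow, ← hX2, AlgEquiv.symm_apply_apply, AlgEquiv.symm_apply_apply] at this

theorem X_two_pow_dvd_of_dvd_X_one_pow_mul_substBeta {m c : ℕ} {f : MvPolynomial (Fin 3) ℂ}
    (h : X 2 ^ m ∣ X 1 ^ c * substBeta f) : X 2 ^ m ∣ f := by
  refine X_two_pow_dvd_of_dvd_substBeta (X_prime.pow_dvd_of_dvd_mul_left m ?_ h)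
  intro hdvd
  exact absurd (X_dvd_X.mp (X_prime.dvd_of_dvd_pow hdvd)) (by decide)

noncomputable def substSigns {ι : Type*} (ε : ι → ℂ) :
    MvPolynomial (Fin 3 ⊕ ι) ℂ →ₐ[ℂ] MvPolynomial (Fin 3) ℂ :=
  aeval (Sum.elim ![X 0, 2 - X 1 ^ 2, X 2] fun i => C (ε i) * X 1)

theorem rel_le_comap_substSigns {n : ℕ} (g : ℕ) {ε : Fin n → ℂ} (hε : ∀ i, ε i ^ 2 = 1) :
    rel n g ≤ (Ideal.span {X 2 ^ (g + 1)}).comap (substSigns ε) := by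
  rw [rel, Ideal.span_le]
  rintro _ (rfl | ⟨i, rfl⟩)
  · exact Ideal.subset_span (by simp [substSigns])
  · have : substSigns ε (X (Sum.inr i) ^ 2 + X (Sum.inl 1) - 2) = 0 := by
      simp [substSigns, mul_pow, ← C_pow, hε i, map_ofNat]
    simp [this]

theorem substSigns_rename_mul_prod {ι : Type*} (c : ι → ℂ) (I : Finset ι)
    (f : MvPolynomial (Fin 3) ℂ) :
    substSigns c (rename Sum.inl f * ∏ i ∈ I, X (Sum.inr i)) =
      (∏ i ∈ I, c i) • (X 1 ^ I.card * substBeta f) := by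
  rw [substSigns, map_mul, aeval_rename, map_prod]
  simp only [aeval_X, Sum.elim_inr]
  rw [Finset.prod_mul_distrib, Finset.prod_const, ← map_prod, ← C_mul']
  change substBeta f * _ = _
  ring

def piSigns {k : ℕ} (hk : 0 < k) (ε : Fin k → ℂ) (i : Fin (k + 2)) : ℂ :=
  if h : (i : ℕ) < k then ε ⟨i, h⟩
  else if (i : ℕ) = k then -ε ⟨k - 1, Nat.sub_lt hk one_pos⟩
  else ε ⟨k - 1, Nat.sub_lt hk one_pos⟩

theorem substSigns_comp_pi {k : ℕ} (hk : 0 < k) (ε : Fin k → ℂ) :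
    (substSigns ε).comp (pi k hk) = substSigns (piSigns hk ε) := by
  refine MvPolynomial.algHom_ext fun v => ?_
  rcases v with j | i
  · simp [pi, substSigns]
  · simp only [pi, substSigns, piSigns, AlgHom.comp_apply, aeval_X, Sum.elim_inr]
    split_ifs <;> simp

theorem piSigns_sq {k : ℕ} (hk : 0 < k) {ε : Fin k → ℂ} (hε : ∀ i, ε i ^ 2 = 1)
    (i : Fin (k + 2)) : piSigns hk ε i ^ 2 = 1 := by
  unfold piSigns
  split_ifs <;> simp [hε]

theorem prod_piSigns {k : ℕ} (hk : 0 < k) (ε : Fin k → ℂ) :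
    ∏ i, piSigns hk ε i = -(∏ i, ε i) * ε ⟨k - 1, Nat.sub_lt hk one_pos⟩ ^ 2 := by
  rw [Fin.prod_univ_castSucc, Fin.prod_univ_castSucc]
  simp [piSigns, pow_two, mul_assoc]

theorem exists_piSigns_prod_eq_neg {k : ℕ} (hk : 0 < k) :
    ∃ ε ε' : Fin k → ℂ, (∀ i, ε i ^ 2 = 1) ∧ (∀ i, ε' i ^ 2 = 1) ∧
      ∏ i, piSigns hk ε' i = -∏ i, piSigns hk ε i := by
  refine ⟨1, Function.update 1 ⟨k - 1, Nat.sub_lt hk one_pos⟩ (-1), by simp, fun i => ?_, ?_⟩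
  · rw [Function.update_apply]
    split_ifs <;> simp
  · rw [prod_piSigns, prod_piSigns, Finset.prod_update_of_mem (Finset.mem_univ _)]
    simp

theorem rename_mul_mem_rel {n g : ℕ} {f : MvPolynomial (Fin 3) ℂ} (hf : X 2 ^ (g + 1) ∣ f)
    (q : MvPolynomial (Fin 3 ⊕ Fin n) ℂ) : rename Sum.inl f * q ∈ rel n g := by
  obtain ⟨f', rfl⟩ := hf
  rw [map_mul, map_pow, rename_X, mul_assoc]
  exact Ideal.mul_mem_right _ _ (Ideal.subset_span (Set.mem_union_left _ rfl))

end Stmt14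

open Stmt14 in
theorem stmt14_general (g k : ℕ) (hk0 : 0 < k)
    (I : Finset (Fin (k + 2)))
    (f h : MvPolynomial (Fin 3) ℂ) :
    pi k hk0
        (rename Sum.inl f * ∏ i ∈ I, X (Sum.inr i)
          + rename Sum.inl h * ∏ i ∈ Iᶜ, X (Sum.inr i)) ∈ rel k g →
      (rename Sum.inl f * ∏ i ∈ I, X (Sum.inr i)
          + rename Sum.inl h * ∏ i ∈ Iᶜ, X (Sum.inr i)) ∈ rel (k + 2) g := by
  intro hx
  set J := (Ideal.span {X 2 ^ (g + 1)} : Ideal (MvPolynomial (Fin 3) ℂ)).restrictScalars ℂ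
  have hJ : ∀ ε : Fin k → ℂ, (∀ i, ε i ^ 2 = 1) →
      (∏ i ∈ I, piSigns hk0 ε i) • (X 1 ^ I.card * substBeta f)
        + (∏ i ∈ Iᶜ, piSigns hk0 ε i) • (X 1 ^ Iᶜ.card * substBeta h) ∈ J := by
    intro ε hε
    have := rel_le_comap_substSigns g hε hx
    rwa [Ideal.mem_comap, ← AlgHom.comp_apply, substSigns_comp_pi, map_add,
      substSigns_rename_mul_prod, substSigns_rename_mul_prod] at this
  obtain ⟨ε, ε', hε, hε', hprod⟩ := exists_piSigns_prod_eq_neg hk0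
  obtain ⟨hf, hh⟩ := Submodule.mem_and_mem_of_smul_add_smul_mem
    (Finset.prod_mul_prod_compl_sub_ne_zero (piSigns_sq hk0 hε) (piSigns_sq hk0 hε') hprod I)
    (hJ ε hε) (hJ ε' hε')
  rw [Submodule.restrictScalars_mem, Ideal.mem_span_singleton] at hf hh
  exact add_mem (rename_mul_mem_rel (X_two_pow_dvd_of_dvd_X_one_pow_mul_substBeta hf) _)
    (rename_mul_mem_rel (X_two_pow_dvd_of_dvd_X_one_pow_mul_substBeta hh) _)

open Stmt14 in
theorem stmt14 (g k : ℕ) (hk : Odd k) (hk0 : 0 < k)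
    (I : Finset (Fin (k + 2))) (hI : I.card ≤ (k + 1) / 2)
    (f h : MvPolynomial (Fin 3) ℂ) :
    pi k hk0
        (rename Sum.inl f * ∏ i ∈ I, X (Sum.inr i)
          + rename Sum.inl h * ∏ i ∈ Iᶜ, X (Sum.inr i)) ∈ rel k g →
      (rename Sum.inl f * ∏ i ∈ I, X (Sum.inr i)
          + rename Sum.inl h * ∏ i ∈ Iᶜ, X (Sum.inr i)) ∈ rel (k + 2) g :=
  stmt14_general g k hk0 I f h
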